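/- arXiv:1204.0609 — 7 statements merged into one kernel-verified Lean document; each statement's English description precedes it below -/
import Mathlib

section
/- For the 3-generalized Fibonacci (Tribonacci-type) numbers, the determinant of the 3×3 matrix (f^{(3)}_{n+i+j})_{0 ≤ i,j ≤ 2} equals (-1)^{(2n+3)·2/2} = (-1)^{2n+3} = -1 for all n. -/
/-!
The Hankel matrices `H n = (f (n + i + j))` of a sequence satisfying a third-order linear
recurrence are related by `H (n + 1) = C * H n`, where `C` is the companion matrix of the
recurrence `f (n + 3) = a f (n + 2) + b f (n + 1) + c f n`. Since `det C = c`, we get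
`det (H n) = c ^ n * det (H 0)`; for Tribonacci `c = 1` and `det (H 0) = -1`.
-/

open Matrix

namespace LinearRecurrence3

variable {R : Type*} [CommRing R]

def hankel (f : ℕ → R) (n : ℕ) : Matrix (Fin 3) (Fin 3) R :=
  Matrix.of fun i j => f (n + i + j)

def companion (a b c : R) : Matrix (Fin 3) (Fin 3) R :=
  !![0, 1, 0; 0, 0, 1; c, b, a]

theorem det_companion (a b c : R) : (companion a b c).det = c := by
  simp [companion, det_fin_three]

theorem hankel_succ {a b c : R} {f : ℕ → R}
    (hrec : ∀ n, f (n + 3) = a * f (n + 2) + b * f (n + 1) + c * f n) (n : ℕ) :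
    hankel f (n + 1) = companion a b c * hankel f n := by
  ext i j
  fin_cases i <;> fin_cases j <;>
    simp [hankel, companion, mul_apply, Fin.sum_univ_three, hrec, add_assoc] <;>
    ring_nf

theorem det_hankel {a b c : R} {f : ℕ → R}
    (hrec : ∀ n, f (n + 3) = a * f (n + 2) + b * f (n + 1) + c * f n) (n : ℕ) :
    (hankel f n).det = c ^ n * (hankel f 0).det := by
  induction n with
  | zero => simp
  | succ n ih => rw [hankel_succ hrec, det_mul, det_companion, ih, pow_succ]; ring

end LinearRecurrence3

theorem tribonacci_det (f : ℕ → ℤ) (h0 : f 0 = 0) (h1 : f 1 = 0) (h2 : f 2 = 1)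
    (hrec : ∀ n, f (n + 3) = f (n + 2) + f (n + 1) + f n) :
    ∀ n : ℕ,
      (Matrix.of fun i j : Fin 3 => f (n + i + j)).det = -1 := by
  intro n
  have hrec' : ∀ n, f (n + 3) = 1 * f (n + 2) + 1 * f (n + 1) + 1 * f n := by simpa using hrec
  have h3 : f 3 = 1 := by simpa [h0, h1, h2] using hrec 0
  have h4 : f 4 = 2 := by simpa [h1, h2, h3] using hrec 1
  have hbase : (LinearRecurrence3.hankel f 0).det = -1 := by
    simp [LinearRecurrence3.hankel, det_fin_three, h0, h1, h2, h3, h4]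
  calc (Matrix.of fun i j : Fin 3 => f (n + i + j)).det
      = 1 ^ n * (LinearRecurrence3.hankel f 0).det := LinearRecurrence3.det_hankel hrec' n
    _ = -1 := by rw [hbase, one_pow, one_mul]
end

section
/- For k ≥ 2 and every n, the determinant of the k×k Hankel matrix (f^{(k)}_{n+i+j})_{0 ≤ i,j ≤ k-1} of k-generalized Fibonacci numbers equals (-1)^{(2n+k)(k-1)/2}. -/
/-!
Write `H n` for the Hankel matrix `(f (n + i + j))_{i,j < k}`. Rotating the rows of `H n` up by
one and replacing the last row by the sum of all rows gives `H (n + 1)`, because of the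
recurrence; hence `det H (n + 1) = (-1) ^ (k - 1) * det H n`. The matrix `H 0` vanishes above
the antidiagonal and has ones on it, so reversing its rows makes it unitriangular and
`det H 0 = sign rev = (-1) ^ (k choose 2)`. Finally
`(2n + k)(k - 1) / 2 = n (k - 1) + k (k - 1) / 2`.
-/

open Equiv Matrix Finset

theorem Fin.sign_revPerm : ∀ n : ℕ,
    Perm.sign (Fin.revPerm : Perm (Fin n)) = (-1) ^ n.choose 2
  | 0 => rfl
  | n + 1 => by
    have hdecomp : (Fin.revPerm : Perm (Fin (n + 1)))
        = finRotate (n + 1) * finSuccEquivLast.symm.permCongr (optionCongr Fin.revPerm) := by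
      ext i
      induction i using Fin.lastCases with
      | last => simp [permCongr_apply]
      | cast i =>
        simp [permCongr_apply, Fin.val_rev]
        omega
    rw [hdecomp, map_mul, sign_finRotate, Perm.sign_permCongr, optionCongr_sign,
      Fin.sign_revPerm n, Nat.choose_succ_succ', Nat.choose_one_right, pow_add,
      Nat.add_sub_cancel]

namespace Matrix

variable {R : Type*} [CommRing R]

theorem det_eq_sign_revPerm_mul_prod_of_antitriangular {k : ℕ} (M : Matrix (Fin k) (Fin k) R)
    (hM : ∀ i j : Fin k, (i : ℕ) + j + 1 < k → M i j = 0) :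
    M.det = Perm.sign (Fin.revPerm : Perm (Fin k)) * ∏ i, M (Fin.rev i) i := by
  have htri : (M.submatrix Fin.revPerm id).IsUpperTriangular := by
    intro i j hji
    apply hM
    simp only [id_eq, Fin.revPerm_apply, Fin.val_rev] at hji ⊢
    omega
  have h := det_permute Fin.revPerm M
  rw [det_of_isUpperTriangular htri] at h
  simp only [submatrix_apply, Fin.revPerm_apply, id_eq] at h
  rw [h, ← mul_assoc, ← Int.cast_mul, ← Units.val_mul, Int.units_mul_self, Units.val_one,
    Int.cast_one, one_mul]

def hankel (k : ℕ) (a : ℕ → R) (n : ℕ) : Matrix (Fin k) (Fin k) R :=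
  of fun i j => a (n + i + j)

theorem det_hankel_succ {m : ℕ} (a : ℕ → R) (c : Fin (m + 1) → R)
    (hrec : ∀ n, a (n + (m + 1)) = ∑ l, c l * a (n + l)) (n : ℕ) :
    (hankel (m + 1) a (n + 1)).det = (-1) ^ m * c 0 * (hankel (m + 1) a n).det := by
  set P := (hankel (m + 1) a n).submatrix (finRotate (m + 1)) id
  have hrow : hankel (m + 1) a (n + 1)
      = P.updateRow (Fin.last m) (∑ l, c (finRotate (m + 1) l) • P l) := by
    ext i j
    induction i using Fin.lastCases with
    | last =>
      have hsum : ∑ l, c (finRotate (m + 1) l) • P l = ∑ l, c l • hankel (m + 1) a n l :=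
        Equiv.sum_comp (finRotate (m + 1)) fun l => c l • hankel (m + 1) a n l
      rw [updateRow_self, hsum]
      simp only [hankel, Finset.sum_apply, Pi.smul_apply, of_apply, smul_eq_mul, Fin.val_last]
      rw [show n + 1 + m + j = n + j + (m + 1) by omega, hrec]
      exact Finset.sum_congr rfl fun l _ => by rw [add_right_comm]
    | cast i =>
      rw [updateRow_ne (Fin.castSucc_lt_last i).ne]
      simp only [P, hankel, submatrix_apply, of_apply, id_eq,
        coe_finRotate_of_ne_last (Fin.castSucc_lt_last i).ne, Fin.val_castSucc]
      ring_nf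
  rw [hrow, det_updateRow_sum, finRotate_last, det_permute, sign_finRotate, smul_eq_mul]
  push_cast
  ring

theorem det_hankel_eq_pow_mul {m : ℕ} (a : ℕ → R) (c : Fin (m + 1) → R)
    (hrec : ∀ n, a (n + (m + 1)) = ∑ l, c l * a (n + l)) (n : ℕ) :
    (hankel (m + 1) a n).det = ((-1) ^ m * c 0) ^ n * (hankel (m + 1) a 0).det := by
  induction n with
  | zero => rw [pow_zero, one_mul]
  | succ n ih =>
    rw [det_hankel_succ a c hrec, ih]
    ring

theorem det_hankel_zero {k : ℕ} (a : ℕ → R) (hzero : ∀ n, n + 1 < k → a n = 0)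
    (hone : a (k - 1) = 1) : (hankel k a 0).det = (-1) ^ k.choose 2 := by
  rw [det_eq_sign_revPerm_mul_prod_of_antitriangular (hankel k a 0)
    (fun i j hij => hzero _ (by omega)), Fin.sign_revPerm]
  have hdiag (i : Fin k) : hankel k a 0 (Fin.rev i) i = 1 := by
    rw [hankel, of_apply, ← hone, Fin.val_rev]
    congr 1
    omega
  simp [hdiag]

end Matrix

theorem Finset.sum_Icc_one_sub_eq_sum_range {M : Type*} [AddCommMonoid M] (g : ℕ → M)
    (n k : ℕ) : ∑ i ∈ Icc 1 k, g (n + k - i) = ∑ l ∈ range k, g (n + l) := by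
  rw [← Ico_add_one_right_eq_Icc, sum_Ico_reflect _ _ (by omega), sum_Ico_eq_sum_range]
  rw [show n + k + 1 - (k + 1) = n by omega, show n + k + 1 - 1 - n = k by omega]

theorem k_fibonacci_det_general (k : ℕ) (f : ℕ → ℤ)
    (hinit : ∀ n ≤ k - 2, f n = 0) (hk1 : f (k - 1) = 1)
    (hrec : ∀ n, k ≤ n → f n = ∑ i ∈ Finset.Icc 1 k, f (n - i)) :
    ∀ n : ℕ,
      (Matrix.of fun i j : Fin k => f (n + i + j)).det
        = (-1) ^ ((2 * n + k) * (k - 1) / 2) := by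
  intro n
  rcases k with _ | m
  · simp
  have hrec' (n : ℕ) : f (n + (m + 1)) = ∑ l : Fin (m + 1), 1 * f (n + l) := by
    simp only [one_mul, Fin.sum_univ_eq_sum_range (fun l => f (n + l)),
      ← sum_Icc_one_sub_eq_sum_range, hrec (n + (m + 1)) (by omega)]
  have hexp : (2 * n + (m + 1)) * (m + 1 - 1) / 2 = m * n + (m + 1).choose 2 := by
    have hsplit : (2 * n + (m + 1)) * m = 2 * (m * n) + (m + 1) * m := by ring
    rw [Nat.choose_two_right, Nat.add_sub_cancel, hsplit, Nat.mul_add_div two_pos]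
  rw [← hankel, det_hankel_eq_pow_mul f _ hrec',
    det_hankel_zero f (fun i hi => hinit i (by omega)) hk1, hexp, mul_one, ← pow_mul, ← pow_add]

theorem k_fibonacci_det (k : ℕ) (hk : 2 ≤ k) (f : ℕ → ℤ)
    (hinit : ∀ n ≤ k - 2, f n = 0) (hk1 : f (k - 1) = 1)
    (hrec : ∀ n, k ≤ n → f n = ∑ i ∈ Finset.Icc 1 k, f (n - i)) :
    ∀ n : ℕ,
      (Matrix.of fun i j : Fin k => f (n + i + j)).det
        = (-1) ^ ((2 * n + k) * (k - 1) / 2) :=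
  k_fibonacci_det_general k f hinit hk1 hrec
end

section
/- In the formal power series ring ℤ[[x]], the identity (1 - x) / (1 - x^k - x^{k+ℓ-1} + x^{k+ℓ}) = 1 / ((x^k-1)/(x-1) - x^{k+ℓ-1}) holds, and the coefficient of x^{ℓ-1} in (1-x)/(1 - x^k - x^{k+ℓ-1} + x^{k+ℓ}) equals 1 if k divides ℓ-1, equals -1 if k divides ℓ-2, and equals 0 otherwise. -/
/-!
Since `(1 - x) (1 + x + ⋯ + x^(k-1)) = 1 - x^k`, the denominator factors as
`(1 - x) ((x^k - 1)/(x - 1) - x^(k+ℓ-1))`, which is the identity. Modulo `x^(k+ℓ-1)` the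
right-hand side agrees with the inverse of `1 + x + ⋯ + x^(k-1)`, namely `(1 - x) ∑ₙ x^(kn)`,
whose coefficient of `x^(n+1)` is `[k ∣ n+1] - [k ∣ n]`; as `ℓ - 1 < k + ℓ - 1`, this is the
coefficient asked for, and `k ≥ 2` rules out both divisibilities at once.
-/

open PowerSeries Finset
open scoped Ring

theorem one_sub_mul_geom_sum_sub_pow {R : Type*} [CommRing R] (x : R) (k m : ℕ) :
    (1 - x) * ((∑ i ∈ range k, x ^ i) - x ^ m) = 1 - x ^ k - x ^ m + x ^ (m + 1) := by
  rw [mul_sub, mul_neg_geom_sum]; ring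

theorem Ring.mul_inverse_mul_cancel_left {M₀ : Type*} [CommMonoidWithZero M₀] {u : M₀}
    (hu : IsUnit u) (a : M₀) :
    u * (u * a)⁻¹ʳ = a⁻¹ʳ := by
  rw [Ring.inverse_mul (.inl hu), mul_comm, mul_assoc, Ring.inverse_mul_cancel _ hu, mul_one]

theorem Ring.dvd_inverse_sub_inverse {R : Type*} [CommRing R] {a b c : R} (ha : IsUnit a)
    (hb : IsUnit b) (h : c ∣ b - a) : c ∣ a⁻¹ʳ - b⁻¹ʳ := by
  rw [Ring.inverse_sub_inverse (iff_of_true ha hb)]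
  exact (h.mul_left _).mul_right _

namespace PowerSeries

variable {R : Type*} [CommRing R]

theorem isUnit_sub_X_pow_mul {a : R⟦X⟧} (ha : IsUnit a) {m : ℕ} (hm : m ≠ 0) (b : R⟦X⟧) :
    IsUnit (a - X ^ m * b) := by
  rw [isUnit_iff_constantCoeff] at ha ⊢
  simpa [zero_pow hm] using ha

theorem coeff_inverse_sub_X_pow_mul {a : R⟦X⟧} (ha : IsUnit a) {m n : ℕ} (hn : n < m)
    (b : R⟦X⟧) :
    coeff n (a - X ^ m * b)⁻¹ʳ = coeff n a⁻¹ʳ := by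
  have hdvd : X ^ m ∣ (a - X ^ m * b)⁻¹ʳ - a⁻¹ʳ :=
    Ring.dvd_inverse_sub_inverse (isUnit_sub_X_pow_mul ha (by omega) b) ha ⟨b, by ring⟩
  rw [← sub_eq_zero, ← map_sub]
  exact X_pow_dvd_iff.mp hdvd n hn

def multiplesOf (k : ℕ) : R⟦X⟧ := mk fun n => if k ∣ n then 1 else 0

theorem one_sub_X_pow_mul_multiplesOf {k : ℕ} (hk : k ≠ 0) :
    (1 - X ^ k : R⟦X⟧) * multiplesOf k = 1 := by
  ext n
  rw [sub_mul, one_mul, map_sub, coeff_X_pow_mul', coeff_one]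
  simp only [multiplesOf, coeff_mk]
  rcases lt_or_ge n k with hnk | hkn
  · rcases Nat.eq_zero_or_pos n with rfl | hn
    · simp [hnk.not_ge]
    · have : ¬ k ∣ n := fun hd => (Nat.le_of_dvd hn hd).not_gt hnk
      simp [this, hnk.not_ge, hn.ne']
  · have hn : n ≠ 0 := by omega
    have : k ∣ n - k ↔ k ∣ n :=
      Nat.dvd_sub_self_right.trans (or_iff_left_of_imp fun h => le_antisymm h hkn ▸ dvd_rfl)
    simp [hkn, this, hn]

theorem geom_sum_mul_one_sub_X_mul_multiplesOf {k : ℕ} (hk : k ≠ 0) :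
    (∑ i ∈ range k, X ^ i : R⟦X⟧) * ((1 - X) * multiplesOf k) = 1 := by
  rw [← mul_assoc, mul_comm _ (1 - X), mul_neg_geom_sum, one_sub_X_pow_mul_multiplesOf hk]

theorem inverse_geom_sum {k : ℕ} (hk : k ≠ 0) :
    (∑ i ∈ range k, X ^ i : R⟦X⟧)⁻¹ʳ = (1 - X) * multiplesOf k := by
  have h := geom_sum_mul_one_sub_X_mul_multiplesOf (R := R) hk
  rw [← Ring.inverse_mul_cancel_left _ ((1 - X) * multiplesOf k) (.of_mul_eq_one _ h), h,
    mul_one]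

theorem coeff_succ_one_sub_X_mul_multiplesOf {k : ℕ} (hk : 2 ≤ k) (n : ℕ) :
    coeff (n + 1) ((1 - X : R⟦X⟧) * multiplesOf k)
      = if k ∣ n + 1 then 1 else if k ∣ n then -1 else 0 := by
  have : ¬ (k ∣ n + 1 ∧ k ∣ n) := fun ⟨h1, h0⟩ =>
    absurd (Nat.le_of_dvd one_pos ((Nat.dvd_add_right h0).mp h1)) (by omega)
  rw [sub_mul, one_mul, map_sub, coeff_succ_X_mul]
  simp only [multiplesOf, coeff_mk]
  split_ifs <;> simp_all

end PowerSeries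

open PowerSeries in
theorem series_identity_and_coeff (k l : ℕ) (hk : 2 ≤ k) (hl : 2 ≤ l) :
    (1 - X) * Ring.inverse (1 - X ^ k - X ^ (k + l - 1) + X ^ (k + l) : ℤ⟦X⟧)
      = Ring.inverse ((∑ i ∈ Finset.range k, X ^ i) - X ^ (k + l - 1) : ℤ⟦X⟧) ∧
    coeff (l - 1)
        ((1 - X) * Ring.inverse (1 - X ^ k - X ^ (k + l - 1) + X ^ (k + l) : ℤ⟦X⟧))
      = if k ∣ l - 1 then 1 else if k ∣ l - 2 then -1 else 0 := by
  have hfactor : (1 - X ^ k - X ^ (k + l - 1) + X ^ (k + l) : ℤ⟦X⟧)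
      = (1 - X) * ((∑ i ∈ range k, X ^ i) - X ^ (k + l - 1)) := by
    rw [one_sub_mul_geom_sum_sub_pow, show k + l - 1 + 1 = k + l by omega]
  have hidentity : (1 - X) * Ring.inverse (1 - X ^ k - X ^ (k + l - 1) + X ^ (k + l) : ℤ⟦X⟧)
      = Ring.inverse ((∑ i ∈ Finset.range k, X ^ i) - X ^ (k + l - 1) : ℤ⟦X⟧) := by
    rw [hfactor, Ring.mul_inverse_mul_cancel_left
      (.of_mul_eq_one_right _ (mk_one_mul_one_sub_eq_one ℤ))]
  refine ⟨hidentity, ?_⟩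
  rw [hidentity, ← mul_one (X ^ (k + l - 1)), coeff_inverse_sub_X_pow_mul
      (.of_mul_eq_one _ (geom_sum_mul_one_sub_X_mul_multiplesOf (by omega))) (by omega),
    inverse_geom_sum (by omega), show l - 1 = l - 2 + 1 by omega,
    coeff_succ_one_sub_X_mul_multiplesOf hk]
end

section
/- Let k, ℓ ≥ 2 and let r_1, …, r_{k+ℓ-1} be the complex roots of g_{k,ℓ}(x) = x^{k+ℓ-1} - (1+x+⋯+x^{k-1}) counted with multiplicity (all nonzero since g_{k,ℓ}(0) = -1). Then ∏_{j=1}^{k+ℓ-1} (r_j^ℓ - 1)/(r_j (r_j - 1)) equals (-1)^{(k+ℓ)ℓ} if gcd(ℓ, k-1) = 1, and equals 0 if gcd(ℓ, k-1) > 1. -/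
/-!
For a root `r` of `g` the factor `(r ^ l - 1) / (r * (r - 1))` is `q(r) / r` with
`q = 1 + X + ⋯ + X ^ (l - 1)`, whose roots are the nontrivial `l`-th roots of unity `ζ`.
The product of the `r` is read off the constant term of `g`, and the product of the `q(r)` is,
up to sign, the product of the `g(ζ)` (both are the resultant of `g` and `q`).
Since `ζ ^ l = 1`, `g(ζ) (ζ - 1) = 1 - ζ ^ (k - 1)`. If `gcd(l, k - 1) = 1`, then
`ζ ↦ ζ ^ (k - 1)` permutes the nontrivial `l`-th roots of unity, so
`∏ (1 - ζ ^ (k - 1)) = ∏ (1 - ζ) = q(1) = l`; otherwise a primitive `gcd(l, k - 1)`-th root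
of unity makes a factor vanish.
-/

open Polynomial Finset

theorem Multiset.map_eq_self_of_injOn {α : Type*} {s : Multiset α} {f : α → α}
    (hs : s.Nodup) (hmaps : ∀ x ∈ s, f x ∈ s)
    (hinj : ∀ x ∈ s, ∀ y ∈ s, f x = f y → x = y) : s.map f = s := by
  refine Multiset.eq_of_le_of_card_le ?_ (Multiset.card_map f s).ge
  rw [Multiset.le_iff_subset (hs.map_on hinj)]
  intro y hy
  obtain ⟨x, hx, rfl⟩ := Multiset.mem_map.mp hy
  exact hmaps x hx

theorem eq_of_pow_eq_of_coprime {G₀ : Type*} [CommGroupWithZero G₀] {m n : ℕ}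
    (hmn : m.Coprime n) {x y : G₀} (hx : x ^ n = 1) (hy : y ^ n = 1) (hxy : x ^ m = y ^ m) :
    x = y := by
  rcases eq_or_ne n 0 with rfl | hn
  · rw [Nat.coprime_zero_right] at hmn
    simpa [hmn] using hxy
  have hy0 : y ≠ 0 := ne_zero_pow hn (hy ▸ one_ne_zero)
  have h : (x / y) ^ m.gcd n = 1 := pow_gcd_eq_one.mpr
    ⟨by rw [div_pow, hxy, div_self (pow_ne_zero _ hy0)], by rw [div_pow, hx, hy, div_one]⟩
  rwa [hmn, pow_one, div_eq_one_iff_eq hy0] at h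

theorem Polynomial.prod_roots_map_eval_comm {R : Type*} [CommRing R] [IsDomain R] {f g : R[X]}
    (hf : f.Monic) (hg : g.Monic) (hf' : f.Splits) (hg' : g.Splits) :
    (f.roots.map g.eval).prod = (-1) ^ (f.natDegree * g.natDegree) * (g.roots.map f.eval).prod := by
  rw [← map_sub_sprod_roots_eq_prod_map_eval _ g hg hg',
    map_sub_roots_sprod_eq_prod_map_eval _ f hf hf', hf'.natDegree_eq_card_roots,
    hg'.natDegree_eq_card_roots, mul_comm (Multiset.card f.roots)]

theorem geom_sum_mul_inv_eq {K : Type*} [Field K] {x : K} (hx : x ≠ 1) (n : ℕ) :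
    (∑ i ∈ range n, x ^ i) * x⁻¹ = (x ^ n - 1) / (x * (x - 1)) := by
  rw [← geom_sum_mul x n]
  field_simp [sub_ne_zero.mpr hx]

section GeomSumX

theorem natDegree_geom_sum_X {R : Type*} [CommRing R] [Nontrivial R] (n : ℕ) :
    (∑ i ∈ range n, (X : R[X]) ^ i).natDegree = n - 1 := by
  rcases Nat.eq_zero_or_pos n with rfl | hn
  · simp
  have h := congrArg natDegree (geom_sum_mul (X : R[X]) n)
  rw [← C_1, (monic_geom_sum_X hn.ne').natDegree_mul (monic_X_sub_C 1), natDegree_X_sub_C,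
    natDegree_X_pow_sub_C] at h
  omega

variable {K : Type*} [Field K]

theorem mem_roots_geom_sum_X {n : ℕ} (hn : (n : K) ≠ 0) {z : K} :
    z ∈ (∑ i ∈ range n, (X : K[X]) ^ i).roots ↔ z ^ n = 1 ∧ z ≠ 1 := by
  have hn0 : n ≠ 0 := by rintro rfl; simp at hn
  rw [mem_roots (monic_geom_sum_X hn0).ne_zero, IsRoot, eval_finsetSum]
  simp only [eval_pow, eval_X]
  by_cases hz : z = 1
  · simp [hz, hn]
  · rw [← mul_left_inj' (sub_ne_zero.mpr hz), geom_sum_mul, zero_mul, sub_eq_zero]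
    exact ⟨fun h => ⟨h, hz⟩, And.left⟩

theorem nodup_roots_geom_sum_X {n : ℕ} (hn : (n : K) ≠ 0) :
    (∑ i ∈ range n, (X : K[X]) ^ i).roots.Nodup :=
  nodup_roots <| (separable_X_pow_sub_C 1 hn one_ne_zero).of_dvd
    ⟨X - 1, by rw [C_1, geom_sum_mul]⟩

variable [IsAlgClosed K]

theorem prod_roots_geom_sum_X_one_sub {n : ℕ} (hn : n ≠ 0) :
    ((∑ i ∈ range n, (X : K[X]) ^ i).roots.map ((1 : K) - ·)).prod = n := by
  rw [← (IsAlgClosed.splits _).eval_eq_prod_roots_of_monic (monic_geom_sum_X hn)]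
  simp [eval_finsetSum]

theorem prod_roots_geom_sum_X_sub_one {n : ℕ} (hn : n ≠ 0) :
    ((∑ i ∈ range n, (X : K[X]) ^ i).roots.map (· - (1 : K))).prod = (-1) ^ (n - 1) * n := by
  have h := Multiset.prod_map_neg ((∑ i ∈ range n, (X : K[X]) ^ i).roots.map ((1 : K) - ·))
  rw [Multiset.map_map, Multiset.card_map, ← (IsAlgClosed.splits _).natDegree_eq_card_roots,
    natDegree_geom_sum_X, prod_roots_geom_sum_X_one_sub hn] at h
  rw [← h]
  exact congrArg _ (Multiset.map_congr rfl fun z _ => (neg_sub 1 z).symm)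

theorem prod_roots_geom_sum_X_one_sub_pow [CharZero K] {n : ℕ} (hn : n ≠ 0) (m : ℕ) :
    ((∑ i ∈ range n, (X : K[X]) ^ i).roots.map fun z => 1 - z ^ m).prod
      = if n.gcd m = 1 then (n : K) else 0 := by
  have hnK : (n : K) ≠ 0 := Nat.cast_ne_zero.mpr hn
  split_ifs with hnm
  · have hperm : (∑ i ∈ range n, (X : K[X]) ^ i).roots.map (· ^ m)
        = (∑ i ∈ range n, (X : K[X]) ^ i).roots := by
      refine Multiset.map_eq_self_of_injOn (nodup_roots_geom_sum_X hnK) (fun z hz => ?_)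
        fun x hx y hy hxy => eq_of_pow_eq_of_coprime (Nat.coprime_comm.mp hnm)
          ((mem_roots_geom_sum_X hnK).mp hx).1 ((mem_roots_geom_sum_X hnK).mp hy).1 hxy
      obtain ⟨hzn, hz1⟩ := (mem_roots_geom_sum_X hnK).mp hz
      refine (mem_roots_geom_sum_X hnK).mpr
        ⟨by rw [← pow_mul, mul_comm, pow_mul, hzn, one_pow], ?_⟩
      intro hzm
      exact hz1 (eq_of_pow_eq_of_coprime (Nat.coprime_comm.mp hnm) hzn (one_pow n)
        (by rw [hzm, one_pow]))
    have h := congrArg (fun s => (s.map ((1 : K) - ·)).prod) hperm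
    rw [Multiset.map_map] at h
    exact h.trans (prod_roots_geom_sum_X_one_sub hn)
  · have hd0 : n.gcd m ≠ 0 := (Nat.gcd_pos_of_pos_left m (Nat.pos_of_ne_zero hn)).ne'
    have : NeZero ((n.gcd m : ℕ) : K) := ⟨Nat.cast_ne_zero.mpr hd0⟩
    obtain ⟨ζ, hζ⟩ := HasEnoughRootsOfUnity.exists_primitiveRoot K (n.gcd m)
    obtain ⟨hζn, hζm⟩ := pow_gcd_eq_one.mp hζ.pow_eq_one
    refine Multiset.prod_eq_zero (Multiset.mem_map.mpr ⟨ζ, ?_, by rw [hζm, sub_self]⟩)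
    exact (mem_roots_geom_sum_X hnK).mpr ⟨hζn, hζ.ne_one (by omega)⟩

end GeomSumX

section XPowSubGeomSumX

variable {R : Type*} [CommRing R] {k n : ℕ}

theorem natDegree_geom_sum_X_lt_natDegree_X_pow [Nontrivial R] (hkn : k ≤ n) (hn : 0 < n) :
    (∑ j ∈ range k, (X : R[X]) ^ j).natDegree < (X ^ n : R[X]).natDegree := by
  rw [natDegree_geom_sum_X, natDegree_X_pow]
  omega

theorem monic_X_pow_sub_geom_sum_X [Nontrivial R] (hkn : k ≤ n) (hn : 0 < n) :
    (X ^ n - ∑ j ∈ range k, (X : R[X]) ^ j).Monic :=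
  (monic_X_pow n).sub_of_left (degree_lt_degree (natDegree_geom_sum_X_lt_natDegree_X_pow hkn hn))

theorem natDegree_X_pow_sub_geom_sum_X [Nontrivial R] (hkn : k ≤ n) (hn : 0 < n) :
    (X ^ n - ∑ j ∈ range k, (X : R[X]) ^ j).natDegree = n := by
  rw [natDegree_sub_eq_left_of_natDegree_lt (natDegree_geom_sum_X_lt_natDegree_X_pow hkn hn),
    natDegree_X_pow]

theorem coeff_zero_X_pow_sub_geom_sum_X (hk : 0 < k) (hn : 0 < n) :
    (X ^ n - ∑ j ∈ range k, (X : R[X]) ^ j).coeff 0 = -1 := by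
  simp [finsetSum_coeff, coeff_X_pow, hn.ne, hk]

theorem not_isRoot_one_X_pow_sub_geom_sum_X (hk : (k : R) ≠ 1) :
    ¬ (X ^ n - ∑ j ∈ range k, (X : R[X]) ^ j).IsRoot 1 := by
  have h : (X ^ n - ∑ j ∈ range k, (X : R[X]) ^ j).eval 1 = 1 - (k : R) := by
    simp [eval_finsetSum]
  rw [IsRoot, h, sub_eq_zero]
  exact hk.symm

theorem eval_X_pow_sub_geom_sum_X_mul_sub_one {l : ℕ} {z : R} (hz : z ^ l = 1) (hk : 0 < k) :
    (X ^ (k + l - 1) - ∑ j ∈ range k, (X : R[X]) ^ j).eval z * (z - 1) = 1 - z ^ (k - 1) := by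
  obtain ⟨k, rfl⟩ : ∃ k', k = k' + 1 := ⟨k - 1, by omega⟩
  rw [show k + 1 + l - 1 = k + l by omega, Nat.add_sub_cancel]
  simp only [eval_sub, eval_pow, eval_X, eval_finsetSum]
  rw [pow_add, hz, mul_one, sub_mul, geom_sum_mul]
  ring

theorem prod_roots_X_pow_sub_geom_sum_X {K : Type*} [Field K] [IsAlgClosed K]
    (hk : 0 < k) (hkn : k ≤ n) (hn : 0 < n) :
    (X ^ n - ∑ j ∈ range k, (X : K[X]) ^ j).roots.prod = (-1) ^ (n + 1) := by
  have h := (IsAlgClosed.splits _).coeff_zero_eq_prod_roots_of_monic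
    (monic_X_pow_sub_geom_sum_X (R := K) hkn hn)
  rw [coeff_zero_X_pow_sub_geom_sum_X hk hn, natDegree_X_pow_sub_geom_sum_X hkn hn] at h
  have hsq : ((-1 : K) ^ n) ^ 2 = 1 := by rw [← pow_mul, pow_mul', neg_one_sq, one_pow]
  linear_combination
    (-(-1 : K) ^ n) * h - (X ^ n - ∑ j ∈ range k, (X : K[X]) ^ j).roots.prod * hsq

theorem prod_roots_geom_sum_X_map_eval_X_pow_sub_geom_sum_X {K : Type*} [Field K] [IsAlgClosed K]
    [CharZero K] {l : ℕ} (hk : 0 < k) (hl : l ≠ 0) :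
    ((∑ i ∈ range l, (X : K[X]) ^ i).roots.map
        (X ^ (k + l - 1) - ∑ j ∈ range k, (X : K[X]) ^ j).eval).prod
      = if l.gcd (k - 1) = 1 then (-1) ^ (l - 1) else 0 := by
  have hlK : (l : K) ≠ 0 := Nat.cast_ne_zero.mpr hl
  set P := ((∑ i ∈ range l, (X : K[X]) ^ i).roots.map
    (X ^ (k + l - 1) - ∑ j ∈ range k, (X : K[X]) ^ j).eval).prod
  have h : P * ((-1) ^ (l - 1) * l) = if l.gcd (k - 1) = 1 then (l : K) else 0 := by
    rw [← prod_roots_geom_sum_X_one_sub_pow hl, ← prod_roots_geom_sum_X_sub_one hl,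
      ← Multiset.prod_map_mul]
    exact congrArg _ (Multiset.map_congr rfl fun z hz =>
      eval_X_pow_sub_geom_sum_X_mul_sub_one ((mem_roots_geom_sum_X hlK).mp hz).1 hk)
  split_ifs at h ⊢
  · have h' : P * (-1) ^ (l - 1) = 1 := mul_right_cancel₀ hlK (by rw [mul_assoc, h, one_mul])
    rw [eq_inv_of_mul_eq_one_left h', ← inv_pow, inv_neg_one]
  · exact (mul_eq_zero.mp h).resolve_right (by simp [hl])

end XPowSubGeomSumX

open Polynomial in
theorem prod_over_roots (k l : ℕ) (hk : 2 ≤ k) (hl : 2 ≤ l)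
    (g : ℂ[X]) (hg : g = X ^ (k + l - 1) - ∑ j ∈ Finset.range k, X ^ j) :
    (g.roots.map fun r => (r ^ l - 1) / (r * (r - 1))).prod
      = if Nat.gcd l (k - 1) = 1 then (-1 : ℂ) ^ ((k + l) * l) else 0 := by
  have hgm : g.Monic := hg ▸ monic_X_pow_sub_geom_sum_X (by omega) (by omega)
  have hqm : (∑ i ∈ range l, (X : ℂ[X]) ^ i).Monic := monic_geom_sum_X (by omega)
  have hfactor : ∀ r ∈ g.roots, (r ^ l - 1) / (r * (r - 1))
      = (∑ i ∈ range l, (X : ℂ[X]) ^ i).eval r * r⁻¹ := by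
    intro r hr
    have hr1 : r ≠ 1 := by
      rintro rfl
      rw [mem_roots hgm.ne_zero, hg] at hr
      exact not_isRoot_one_X_pow_sub_geom_sum_X (by exact_mod_cast (by omega : k ≠ 1)) hr
    simp [eval_finsetSum, geom_sum_mul_inv_eq hr1]
  rw [Multiset.map_congr rfl hfactor, Multiset.prod_map_mul, Multiset.prod_map_inv,
    Multiset.map_id',
    prod_roots_map_eval_comm hgm hqm (IsAlgClosed.splits _) (IsAlgClosed.splits _),
    hg, prod_roots_geom_sum_X_map_eval_X_pow_sub_geom_sum_X (by omega) (by omega),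
    prod_roots_X_pow_sub_geom_sum_X (by omega) (by omega) (by omega),
    natDegree_X_pow_sub_geom_sum_X (by omega) (by omega), natDegree_geom_sum_X,
    show k + l - 1 + 1 = k + l by omega, ← inv_pow, inv_neg_one]
  split_ifs
  · rw [← pow_add, ← pow_add]
    congr 1
    obtain ⟨a, rfl⟩ : ∃ a, l = a + 1 := ⟨l - 1, by omega⟩
    rw [Nat.add_sub_cancel, show k + (a + 1) - 1 = k + a by omega]
    ring
  · rw [mul_zero, zero_mul]
end

section
/- For integers k, ℓ ≥ 2 and every j ≥ 1, det(Ã_{j,k,ℓ}) = (-1)^{k+ℓ-2} · det(Ã_{j-1,k,ℓ}); consequently det(Ã_{j,k,ℓ}) = (-1)^{j(k+ℓ-2)} · det(Ã_{0,k,ℓ}) for all j ≥ 0. -/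
/-!
Row `i` of `Ã_j` is row `i + 1` of `Ã_{j-1}`, and the recurrence makes the last row of `Ã_j` the
sum of the first `k` rows of `Ã_{j-1}`. So `Ã_j` arises from `Ã_{j-1}` by rotating its `k + ℓ - 1`
rows cyclically, which costs the sign `(-1)^(k+ℓ-2)`, and then adding other rows to the last one.
-/

open Matrix Finset

theorem sum_Icc_sub_eq_sum_range {M : Type*} [AddCommMonoid M] (f : ℕ → M) {k l : ℕ}
    (hl : 1 ≤ l) (m : ℕ) :
    ∑ s ∈ Icc l (k + l - 1), f (m + (k + l - 1) - s) = ∑ t ∈ range k, f (m + t) := by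
  rw [← Ico_add_one_right_eq_Icc, sum_Ico_eq_sum_range, show k + l - 1 + 1 - l = k by omega,
    ← sum_range_reflect]
  refine sum_congr rfl fun t ht => ?_
  rw [mem_range] at ht
  congr 1
  omega

theorem Fin.sum_ite_val_lt_eq_sum_range {M : Type*} [AddCommMonoid M] (f : ℕ → M) {k N : ℕ}
    (hk : k ≤ N) :
    ∑ t : Fin N, (if (t : ℕ) < k then f t else 0) = ∑ t ∈ range k, f t := by
  rw [Fin.sum_univ_eq_sum_range (fun t => if t < k then f t else 0), ← sum_filter]
  congr 1
  ext t
  simp only [mem_filter, mem_range]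
  omega

variable {R : Type*} [CommRing R]

theorem Matrix.det_eq_of_rows_eq_finRotate_of_last_eq_sum {n : ℕ}
    {M N : Matrix (Fin (n + 1)) (Fin (n + 1)) R} (a : Fin (n + 1) → R)
    (hN : ∀ i ≠ Fin.last n, N i = M (finRotate _ i))
    (hlast : N (Fin.last n) = ∑ t, a t • M t) :
    N.det = (-1) ^ n * a 0 * M.det := by
  set M' := M.submatrix (finRotate _) id
  have hN_eq : N = M'.updateRow (Fin.last n) (∑ i, a (finRotate _ i) • M' i) := by
    funext i
    by_cases hi : i = Fin.last n
    · rw [hi, updateRow_self, hlast]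
      exact (Equiv.sum_comp (finRotate _) fun t => a t • M t).symm
    · rw [updateRow_ne hi, hN i hi]
      rfl
  rw [hN_eq, det_updateRow_sum, finRotate_last, det_permute, sign_finRotate]
  simp only [add_tsub_cancel_right, smul_eq_mul, Units.val_pow_eq_pow_val, Units.val_neg,
    Units.val_one, Int.cast_pow, Int.cast_neg, Int.cast_one]
  ring

def windowMatrix {n : ℕ} (u : ℕ → R) (d : Fin n → ℕ) (j : ℕ) :
    Matrix (Fin n) (Fin n) R :=
  of fun i c => u (j + i + d c)

section
variable {n : ℕ} {u : ℕ → R} {a : Fin (n + 1) → R}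
  (hu : ∀ m, u (m + (n + 1)) = ∑ t, a t * u (m + t)) (d : Fin (n + 1) → ℕ)
include hu

theorem det_windowMatrix_succ (j : ℕ) :
    (windowMatrix u d (j + 1)).det = (-1) ^ n * a 0 * (windowMatrix u d j).det := by
  refine det_eq_of_rows_eq_finRotate_of_last_eq_sum a (fun i hi => ?_) ?_ <;> ext c
  · simp only [windowMatrix, of_apply, coe_finRotate_of_ne_last hi]
    ring_nf
  · simp only [windowMatrix, of_apply, Fin.val_last, Finset.sum_apply, Pi.smul_apply, smul_eq_mul]
    rw [show j + 1 + n + d c = (j + d c) + (n + 1) by ring, hu]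
    simp only [add_right_comm]

theorem det_windowMatrix (j : ℕ) :
    (windowMatrix u d j).det = ((-1) ^ n * a 0) ^ j * (windowMatrix u d 0).det := by
  induction j with
  | zero => simp
  | succ j ih => rw [det_windowMatrix_succ hu, ih, pow_succ]; ring
end

theorem det_shift_general (k l : ℕ) (hk : 2 ≤ k) (hl : 2 ≤ l) (C : ℕ → ℤ)
    (hrec : ∀ n, k + l - 1 ≤ n → C n = ∑ m ∈ Finset.Icc l (k + l - 1), C (n - m))
    (A : ℕ → Matrix (Fin (k + l - 1)) (Fin (k + l - 1)) ℤ)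
    (hA : ∀ j, A j = Matrix.of fun i c : Fin (k + l - 1) =>
      if (c : ℕ) = 0 then C (j + (i : ℕ)) else C (j + (i : ℕ) + l + (c : ℕ) - 1)) :
    (∀ j, 1 ≤ j → (A j).det = (-1) ^ (k + l - 2) * (A (j - 1)).det) ∧
      (∀ j, (A j).det = (-1) ^ (j * (k + l - 2)) * (A 0).det) := by
  have hC (m : ℕ) : C (m + (k + l - 1)) = ∑ t ∈ range k, C (m + t) := by
    rw [hrec _ le_add_self, sum_Icc_sub_eq_sum_range C (by omega)]
  have hkN : k ≤ k + l - 1 := by omega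
  obtain ⟨n, hn⟩ : ∃ n, k + l - 1 = n + 1 := ⟨k + l - 2, by omega⟩
  rw [show k + l - 2 = n by omega]
  generalize k + l - 1 = N at A hA hC hkN hn
  subst hn
  set a : Fin (n + 1) → ℤ := fun t => if (t : ℕ) < k then 1 else 0
  have hu (m : ℕ) : C (m + (n + 1)) = ∑ t, a t * C (m + t) := by
    simp only [a, ite_mul, one_mul, zero_mul]
    rw [hC, Fin.sum_ite_val_lt_eq_sum_range (fun t => C (m + t)) hkN]
  have ha0 : a 0 = 1 := if_pos (by simp only [Fin.val_zero]; omega)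
  obtain rfl : A = windowMatrix C fun c => if (c : ℕ) = 0 then 0 else l + c - 1 := by
    funext j
    rw [hA]
    ext i c
    simp only [windowMatrix, of_apply]
    split_ifs
    · rfl
    · congr 1; omega
  refine ⟨fun j hj => ?_, fun j => ?_⟩
  · obtain ⟨i, rfl⟩ := Nat.exists_eq_add_of_le' hj
    simpa [ha0] using det_windowMatrix_succ hu _ i
  · rw [det_windowMatrix hu _ j, ha0, mul_one, ← pow_mul, mul_comm n j]

theorem det_shift (k l : ℕ) (hk : 2 ≤ k) (hl : 2 ≤ l) (C : ℕ → ℤ)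
    (hC0 : C 0 = 1)
    (hC1 : ∀ n, 1 ≤ n → n ≤ k - 1 → C n = 0)
    (hC2 : ∀ n, k ≤ n → n ≤ k + l - 2 → C n = 1)
    (hrec : ∀ n, k + l - 1 ≤ n → C n = ∑ m ∈ Finset.Icc l (k + l - 1), C (n - m))
    (A : ℕ → Matrix (Fin (k + l - 1)) (Fin (k + l - 1)) ℤ)
    (hA : ∀ j, A j = Matrix.of fun i c : Fin (k + l - 1) =>
      if (c : ℕ) = 0 then C (j + (i : ℕ)) else C (j + (i : ℕ) + l + (c : ℕ) - 1)) :
    (∀ j, 1 ≤ j → (A j).det = (-1) ^ (k + l - 2) * (A (j - 1)).det) ∧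
      (∀ j, (A j).det = (-1) ^ (j * (k + l - 2)) * (A 0).det) :=
  det_shift_general k l hk hl C hrec A hA
end

section
/- For integers k, ℓ ≥ 2, if k divides neither ℓ-1 nor ℓ-2, or if gcd(ℓ, k-1) > 1, then det(Ã_{0,k,ℓ}) = 0. -/
/-!
Let `S` be the shift `f ↦ f (· + 1)` on integer sequences and `N = k + ℓ - 1`. The recurrence
says `p(S) C̃ = 0` for `p = X ^ N - (1 + X + ⋯ + X ^ (k - 1))`. Row `i` of `Ã_{0,k,ℓ}` lists
`C̃ (i + s)` for the column offsets `s ∈ {0, ℓ, ℓ + 1, …, N + ℓ - 2}`. Hence a nonzero `q` with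
`q(S) C̃ = 0` is a column relation if all its exponents are column offsets, and a row relation
(with coefficient vector `q` itself) if `deg q < N`.

If `k ∤ ℓ - 1` and `k ∤ ℓ - 2`, some multiple `kT` lies in `[ℓ, k + ℓ - 3]`, and the multiple
`(1 - X) p (1 + X ^ k + ⋯ + X ^ (k (T - 1)))
  = X ^ (kT) - 1 + ∑_{t < T} (X ^ (N + kt) - X ^ (N + kt + 1))`
of `p` only has column offsets as exponents.

If `d ∣ ℓ` and `d ∣ k - 1` with `d ≥ 2`, then
`u = (X - 1)(1 + X ^ d + ⋯ + X ^ (N - d)) - X (1 + X ^ d + ⋯ + X ^ (k - 1 - d))` satisfies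
`(X ^ d - 1) u = (X - 1) p`, so `u(S) C̃` is `d`-periodic. It vanishes on `0, …, d - 1` by the
initial values, hence everywhere, while `deg u = N + 1 - d < N`.
-/

open Polynomial Finset Function

section SeqShift

variable {R : Type*} [CommSemiring R]

variable (R) in
def seqShift : Module.End R (ℕ → R) :=
  LinearMap.funLeft R R (· + 1)

@[simp]
theorem seqShift_apply (f : ℕ → R) (n : ℕ) : seqShift R f n = f (n + 1) := rfl

@[simp]
theorem seqShift_pow_apply (j : ℕ) (f : ℕ → R) (n : ℕ) : (seqShift R ^ j) f n = f (n + j) := by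
  induction j generalizing n with
  | zero => rfl
  | succ j ih => rw [pow_succ', Module.End.mul_apply, seqShift_apply, ih, add_right_comm, add_assoc]

theorem aeval_seqShift_apply (q : R[X]) (f : ℕ → R) (n : ℕ) :
    aeval (seqShift R) q f n = ∑ j ∈ q.support, q.coeff j * f (n + j) := by
  rw [aeval_def, eval₂_eq_sum, Polynomial.sum, LinearMap.sum_apply, Finset.sum_apply]
  simp [Module.algebraMap_end_apply]

theorem aeval_seqShift_eq_zero_of_dvd {p q : R[X]} {f : ℕ → R} (hpq : p ∣ q)
    (hp : aeval (seqShift R) p f = 0) : aeval (seqShift R) q f = 0 := by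
  obtain ⟨r, rfl⟩ := hpq
  rw [mul_comm, map_mul, Module.End.mul_apply, hp, map_zero]

theorem sum_coeff_mul_eq_aeval_seqShift {ι : Type*} [Fintype ι] {s : ι → ℕ} (hs : Injective s)
    {q : R[X]} (hqs : ∀ j, q.coeff j ≠ 0 → j ∈ Set.range s) (f : ℕ → R) (n : ℕ) :
    ∑ i, q.coeff (s i) * f (n + s i) = aeval (seqShift R) q f n := by
  classical
  rw [aeval_seqShift_apply,
    ← Finset.sum_image (f := fun j => q.coeff j * f (n + j)) (fun i _ j _ h => hs h)]
  symm
  refine Finset.sum_subset (fun j hj => ?_) (fun j _ hj => ?_)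
  · obtain ⟨i, rfl⟩ := hqs j (mem_support_iff.mp hj)
    exact mem_image_of_mem s (mem_univ i)
  · rw [notMem_support_iff.mp hj, zero_mul]

theorem coeff_comp_ne_zero {ι : Type*} {s : ι → ℕ} {q : R[X]} (hq : q ≠ 0)
    (hqs : ∀ j, q.coeff j ≠ 0 → j ∈ Set.range s) : (fun i => q.coeff (s i)) ≠ 0 := by
  obtain ⟨j, hj⟩ : ∃ j, q.coeff j ≠ 0 := by simpa [Polynomial.ext_iff] using hq
  obtain ⟨i, rfl⟩ := hqs j hj
  exact fun h => hj (congr_fun h i)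

end SeqShift

def shiftMatrix {R : Type*} {N : ℕ} (f : ℕ → R) (s : Fin N → ℕ) : Matrix (Fin N) (Fin N) R :=
  Matrix.of fun i c => f (i + s c)

section ShiftMatrix

variable {R : Type*} [CommRing R] [IsDomain R] {N : ℕ} {f : ℕ → R} {q : R[X]}

theorem det_shiftMatrix_eq_zero_of_support {s : Fin N → ℕ} (hs : Injective s) (hq : q ≠ 0)
    (hqs : ∀ j, q.coeff j ≠ 0 → j ∈ Set.range s) (hqf : aeval (seqShift R) q f = 0) :
    (shiftMatrix f s).det = 0 := by
  refine Matrix.exists_mulVec_eq_zero_iff.mp ⟨_, coeff_comp_ne_zero hq hqs, funext fun i => ?_⟩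
  simp_rw [Matrix.mulVec, dotProduct, shiftMatrix, Matrix.of_apply, mul_comm (f _)]
  rw [sum_coeff_mul_eq_aeval_seqShift hs hqs, hqf, Pi.zero_apply, Pi.zero_apply]

theorem det_shiftMatrix_eq_zero_of_natDegree_lt (s : Fin N → ℕ) (hq : q ≠ 0)
    (hqN : q.natDegree < N) (hqf : aeval (seqShift R) q f = 0) :
    (shiftMatrix f s).det = 0 := by
  have hqs : ∀ j, q.coeff j ≠ 0 → j ∈ Set.range (Fin.val : Fin N → ℕ) := fun j hj =>
    ⟨⟨j, (le_natDegree_of_ne_zero hj).trans_lt hqN⟩, rfl⟩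
  refine Matrix.exists_vecMul_eq_zero_iff.mp ⟨_, coeff_comp_ne_zero hq hqs, funext fun c => ?_⟩
  simp_rw [Matrix.vecMul, dotProduct, shiftMatrix, Matrix.of_apply, add_comm _ (s c)]
  rw [sum_coeff_mul_eq_aeval_seqShift Fin.val_injective hqs, hqf, Pi.zero_apply, Pi.zero_apply]

end ShiftMatrix

def colShift {N : ℕ} (l : ℕ) (c : Fin N) : ℕ := if (c : ℕ) = 0 then 0 else l + c - 1

theorem colShift_injective {N l : ℕ} (hl : 0 < l) : Injective (colShift (N := N) l) := by
  intro c c' h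
  simp only [colShift] at h
  ext
  split_ifs at h <;> omega

theorem mem_range_colShift {N l j : ℕ} (hN : 0 < N) (hj : j = 0 ∨ l ≤ j ∧ j + 2 ≤ N + l) :
    j ∈ Set.range (colShift (N := N) l) := by
  rcases hj with rfl | hj
  · exact ⟨⟨0, hN⟩, if_pos rfl⟩
  · exact ⟨⟨j + 1 - l, by omega⟩, by simp only [colShift]; split_ifs <;> omega⟩

theorem shiftMatrix_colShift {N l : ℕ} (C : ℕ → ℤ) :
    shiftMatrix C (colShift l) = Matrix.of fun i c : Fin N =>
      if (c : ℕ) = 0 then C i else C (i + l + c - 1) := by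
  ext i c
  simp only [shiftMatrix, colShift, Matrix.of_apply]
  split_ifs
  · rfl
  · congr 1; omega

theorem natDegree_geom_sum_X_lt {R : Type*} [Semiring R] {k : ℕ} (hk : 0 < k) :
    (∑ j ∈ range k, (X : R[X]) ^ j).natDegree < k := by
  refine (natDegree_sum_le_of_forall_le _ _ (n := k - 1) fun j hj => ?_).trans_lt (by omega)
  exact (natDegree_X_pow_le j).trans (by have := mem_range.mp hj; omega)

noncomputable def recPoly (k l : ℕ) : ℤ[X] := X ^ (k + l - 1) - ∑ j ∈ range k, X ^ j

theorem natDegree_recPoly {k l : ℕ} (hk : 0 < k) (hl : 0 < l) :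
    (recPoly k l).natDegree = k + l - 1 := by
  have := natDegree_geom_sum_X_lt (R := ℤ) hk
  rw [recPoly, natDegree_sub_eq_left_of_natDegree_lt] <;> rw [natDegree_X_pow]
  omega

theorem recPoly_ne_zero {k l : ℕ} (hk : 0 < k) (hl : 0 < l) : recPoly k l ≠ 0 :=
  ne_zero_of_natDegree_gt (n := 0) (by rw [natDegree_recPoly hk hl]; omega)

structure IsCTilde (k l : ℕ) (C : ℕ → ℤ) : Prop where
  zero : C 0 = 1
  eq_zero : ∀ n, 1 ≤ n → n ≤ k - 1 → C n = 0
  eq_one : ∀ n, k ≤ n → n ≤ k + l - 2 → C n = 1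
  recurrence : ∀ n, k + l - 1 ≤ n → C n = ∑ m ∈ Icc l (k + l - 1), C (n - m)

namespace IsCTilde

variable {k l : ℕ} {C : ℕ → ℤ}

theorem add_eq_sum_range (hC : IsCTilde k l C) (hk : 0 < k) (n : ℕ) :
    C (n + (k + l - 1)) = ∑ j ∈ range k, C (n + j) := by
  rw [hC.recurrence _ le_add_self]
  refine sum_nbij' (k + l - 1 - ·) (k + l - 1 - ·) ?_ ?_ ?_ ?_ ?_ <;> intro m hm <;>
    simp only [mem_Icc, mem_range] at hm ⊢
  all_goals first | omega | (congr 1; omega)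

theorem aeval_recPoly (hC : IsCTilde k l C) (hk : 0 < k) :
    aeval (seqShift ℤ) (recPoly k l) C = 0 := by
  ext n
  simp [recPoly, hC.add_eq_sum_range hk]

theorem eq_ite_of_le (hC : IsCTilde k l C) (hk : 0 < k) {n : ℕ} (hn : n ≤ k + l - 1) :
    C n = if n = 0 ∨ k ≤ n then 1 else 0 := by
  rcases Nat.eq_zero_or_pos n with rfl | hn0
  · simp [hC.zero]
  by_cases hnk : n < k
  · rw [hC.eq_zero n hn0 (by omega), if_neg (by omega)]
  rw [if_pos (by omega)]
  by_cases hnl : n ≤ k + l - 2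
  · exact hC.eq_one n (by omega) hnl
  obtain rfl : n = 0 + (k + l - 1) := by omega
  rw [hC.add_eq_sum_range hk, ← Nat.sub_add_cancel hk, sum_range_succ', sum_eq_zero, zero_add,
    hC.zero]
  intro j hj
  exact hC.eq_zero _ (by omega) (by have := mem_range.mp hj; omega)

theorem succ_sub_eq (hC : IsCTilde k l C) (hk : 0 < k) {n : ℕ} (hn : n + 1 ≤ k + l - 1) :
    C (n + 1) - C n = (if n + 1 = k then 1 else 0) - (if n = 0 then 1 else 0) := by
  rw [hC.eq_ite_of_le hk hn, hC.eq_ite_of_le hk (by omega)]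
  simp only [Nat.add_one_ne_zero, false_or]
  split_ifs <;> omega

end IsCTilde

theorem exists_mul_mem_Icc {k l : ℕ} (hk : 0 < k) (h₁ : ¬ k ∣ l - 1) (h₂ : ¬ k ∣ l - 2) :
    ∃ T, l ≤ k * T ∧ k * T + 3 ≤ k + l := by
  have hl : 3 ≤ l := by
    by_contra! hl
    exact h₂ (by rw [Nat.sub_eq_zero_of_le (by omega)]; exact dvd_zero k)
  refine ⟨(l - 3) / k + 1, ?_⟩
  have hdiv := Nat.div_add_mod (l - 3) k
  have hmod := Nat.mod_lt (l - 3) hk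
  have h₁' : k * ((l - 3) / k + 1) ≠ l - 1 := fun h => h₁ ⟨_, h.symm⟩
  have h₂' : k * ((l - 3) / k + 1) ≠ l - 2 := fun h => h₂ ⟨_, h.symm⟩
  rw [mul_add_one] at h₁' h₂' ⊢
  generalize k * ((l - 3) / k) = a at *
  omega

noncomputable def colPoly (k l T : ℕ) : ℤ[X] :=
  X ^ (k * T) - 1 + ∑ t ∈ range T, (X ^ (k + l - 1 + k * t) - X ^ (k + l - 1 + k * t + 1))

theorem recPoly_dvd_colPoly (k l T : ℕ) : recPoly k l ∣ colPoly k l T := by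
  refine ⟨(1 - X) * ∑ t ∈ range T, (X ^ k) ^ t, ?_⟩
  have hS := geom_sum_mul_neg (X : ℤ[X]) k
  have hG := geom_sum_mul ((X : ℤ[X]) ^ k) T
  have hcol : colPoly k l T = X ^ (k * T) - 1 +
      (X ^ (k + l - 1) - X ^ (k + l - 1 + 1)) * ∑ t ∈ range T, (X ^ k) ^ t := by
    rw [colPoly, mul_sum]
    exact congrArg (_ + ·) (sum_congr rfl fun t _ => by ring)
  rw [hcol, recPoly]
  linear_combination (∑ t ∈ range T, ((X : ℤ[X]) ^ k) ^ t) * hS - hG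

theorem coeff_colPoly_of_not_mem {k l T j : ℕ} (hlT : l ≤ k * T) (hTl : k * T + 3 ≤ k + l)
    (hj : j < l ∨ k + l - 1 + l < j + 2) :
    (colPoly k l T).coeff j = -(if j = 0 then 1 else 0) := by
  simp only [colPoly, coeff_add, coeff_sub, coeff_X_pow, coeff_one, finsetSum_coeff]
  rw [sum_eq_zero fun t ht => ?_, if_neg (by omega)]
  · ring
  have : k * t + k ≤ k * T := by
    rw [← mul_add_one]; exact Nat.mul_le_mul_left k (by simpa using ht)
  rw [if_neg (by omega), if_neg (by omega), sub_zero]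

theorem exists_recPoly_dvd_of_not_dvd {k l : ℕ} (hk : 0 < k) (h₁ : ¬ k ∣ l - 1)
    (h₂ : ¬ k ∣ l - 2) : ∃ q : ℤ[X], q ≠ 0 ∧ recPoly k l ∣ q ∧
      ∀ j, q.coeff j ≠ 0 → j = 0 ∨ l ≤ j ∧ j + 2 ≤ k + l - 1 + l := by
  obtain ⟨T, hlT, hTl⟩ := exists_mul_mem_Icc hk h₁ h₂
  have hl : 0 < l := Nat.pos_of_ne_zero fun h => h₁ (by simp [h])
  refine ⟨colPoly k l T, fun h => ?_, recPoly_dvd_colPoly k l T, fun j hj => ?_⟩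
  · simpa [h] using coeff_colPoly_of_not_mem hlT hTl (j := 0) (by omega)
  · by_contra h
    exact hj (by rw [coeff_colPoly_of_not_mem hlT hTl (by omega), if_neg (by omega), neg_zero])

section RowRelation

noncomputable def rowPoly (d M₁ M₂ : ℕ) : ℤ[X] :=
  (∑ t ∈ range M₁, (X ^ d) ^ t) * (X - 1) - (∑ t ∈ range M₂, (X ^ d) ^ t) * X

variable {k l d M₁ M₂ : ℕ}

theorem X_pow_sub_one_mul_rowPoly (hk : 0 < k) (h₁ : d * M₁ = k + l - 1) (h₂ : d * M₂ = k - 1) :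
    (X ^ d - 1) * rowPoly d M₁ M₂ = (X - 1) * recPoly k l := by
  have hG₁ := geom_sum_mul ((X : ℤ[X]) ^ d) M₁
  have hG₂ := geom_sum_mul ((X : ℤ[X]) ^ d) M₂
  have hS := geom_sum_mul (X : ℤ[X]) k
  rw [← pow_mul, h₁] at hG₁
  rw [← pow_mul, h₂] at hG₂
  have hXk : (X : ℤ[X]) ^ (k - 1) * X = X ^ k := by rw [← pow_succ, Nat.sub_add_cancel hk]
  rw [rowPoly, recPoly]
  linear_combination (X - 1) * hG₁ - X * hG₂ + hS - hXk

theorem rowPoly_ne_zero (hk : 0 < k) (hl : 0 < l) (h₁ : d * M₁ = k + l - 1)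
    (h₂ : d * M₂ = k - 1) : rowPoly d M₁ M₂ ≠ 0 := by
  intro h
  have h' := X_pow_sub_one_mul_rowPoly hk h₁ h₂
  rw [h, mul_zero, eq_comm, ← C_1] at h'
  exact mul_ne_zero (X_sub_C_ne_zero 1) (recPoly_ne_zero hk hl) h'

theorem natDegree_rowPoly (hk : 0 < k) (hl : 0 < l) (h₁ : d * M₁ = k + l - 1)
    (h₂ : d * M₂ = k - 1) : (rowPoly d M₁ M₂).natDegree = k + l - d := by
  have hd : 0 < d := Nat.pos_of_ne_zero fun h => by simp [h] at h₁; omega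
  have hXd : (X : ℤ[X]) ^ d - 1 ≠ 0 := by simpa using X_pow_sub_C_ne_zero hd (1 : ℤ)
  have hX : (X : ℤ[X]) - 1 ≠ 0 := by simpa using X_sub_C_ne_zero (1 : ℤ)
  have h := congrArg natDegree (X_pow_sub_one_mul_rowPoly hk h₁ h₂)
  rw [natDegree_mul hXd (rowPoly_ne_zero hk hl h₁ h₂), natDegree_mul hX (recPoly_ne_zero hk hl),
    natDegree_recPoly hk hl] at h
  simp only [← C_1, natDegree_X_pow_sub_C, natDegree_X_sub_C] at h
  omega

theorem sum_range_ite_add_mul_eq {j m M : ℕ} (hj : j < d) (hm : m < M) :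
    ∑ t ∈ range M, (if j + d * t = d * m then (1 : ℤ) else 0) = if j = 0 then 1 else 0 := by
  have key (t : ℕ) : j + d * t = d * m ↔ j = 0 ∧ t = m := by
    refine ⟨fun h => ?_, by rintro ⟨rfl, rfl⟩; simp⟩
    have hj0 : j = 0 := by
      simpa [Nat.add_mul_mod_self_left, Nat.mod_eq_of_lt hj] using congrArg (· % d) h
    subst hj0
    exact ⟨rfl, Nat.eq_of_mul_eq_mul_left (by omega) (by simpa using h)⟩
  simp_rw [key, ite_and]
  split_ifs <;> simp [hm]

namespace IsCTilde

variable {C : ℕ → ℤ}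

theorem aeval_rowPoly_apply_of_lt (hC : IsCTilde k l C) (hk : 0 < k) (hl : 0 < l)
    (h₁ : d * M₁ = k + l - 1) (h₂ : d * M₂ = k - 1) {j : ℕ} (hj : j < d) :
    aeval (seqShift ℤ) (rowPoly d M₁ M₂) C j = 0 := by
  have hM₂ : M₂ < M₁ := Nat.lt_of_mul_lt_mul_left (by omega : d * M₂ < d * M₁)
  have hle {M t : ℕ} (ht : t ∈ range M) : d * t + d ≤ d * M := by
    rw [← mul_add_one]; exact Nat.mul_le_mul_left d (by simpa using ht)
  have hdiff (t : ℕ) (ht : t ∈ range M₁) : C (j + d * t + 1) - C (j + d * t) =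
      (if j + d * t = d * M₂ then 1 else 0) - (if j + d * t = d * 0 then 1 else 0) := by
    have := hle ht
    rw [hC.succ_sub_eq hk (n := j + d * t) (by omega), h₂, mul_zero]
    simp only [show j + d * t + 1 = k ↔ j + d * t = k - 1 by omega]
  simp only [rowPoly, ← pow_mul, map_sub, map_mul, map_sum, map_pow, aeval_X, map_one,
    LinearMap.sub_apply, Module.End.mul_apply, Module.End.one_apply, LinearMap.coe_sum,
    Finset.sum_apply, Pi.sub_apply, seqShift_pow_apply, seqShift_apply]
  rw [← sum_sub_distrib, sum_congr rfl hdiff, sum_sub_distrib,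
    sum_range_ite_add_mul_eq hj hM₂, sum_range_ite_add_mul_eq hj (by omega : 0 < M₁),
    sum_eq_zero fun t ht => hC.eq_zero (j + d * t + 1) (by omega) (by have := hle ht; omega)]
  ring

theorem aeval_rowPoly (hC : IsCTilde k l C) (hk : 0 < k) (hl : 0 < l)
    (h₁ : d * M₁ = k + l - 1) (h₂ : d * M₂ = k - 1) :
    aeval (seqShift ℤ) (rowPoly d M₁ M₂) C = 0 := by
  have hd : 0 < d := Nat.pos_of_ne_zero fun h => by simp [h] at h₁; omega
  have hper : Periodic (aeval (seqShift ℤ) (rowPoly d M₁ M₂) C) d := fun n => by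
    have h := aeval_seqShift_eq_zero_of_dvd (dvd_mul_left (recPoly k l) (X - 1))
      (hC.aeval_recPoly hk)
    rw [← X_pow_sub_one_mul_rowPoly hk h₁ h₂, map_mul, Module.End.mul_apply] at h
    simpa [sub_eq_zero] using congr_fun h n
  ext n
  rw [← hper.map_mod_nat, hC.aeval_rowPoly_apply_of_lt hk hl h₁ h₂ (Nat.mod_lt n hd)]
  rfl

theorem exists_aeval_eq_zero_of_dvd (hC : IsCTilde k l C) (hk : 0 < k) (hl : 0 < l)
    (hd : 2 ≤ d) (hdl : d ∣ l) (hdk : d ∣ k - 1) :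
    ∃ u : ℤ[X], u ≠ 0 ∧ u.natDegree < k + l - 1 ∧ aeval (seqShift ℤ) u C = 0 := by
  obtain ⟨L, rfl⟩ := hdl
  obtain ⟨M₂, hM₂⟩ := hdk
  have h₁ : d * (M₂ + L) = k + d * L - 1 := by rw [mul_add, ← hM₂]; omega
  refine ⟨rowPoly d (M₂ + L) M₂, rowPoly_ne_zero hk hl h₁ hM₂.symm, ?_,
    hC.aeval_rowPoly hk hl h₁ hM₂.symm⟩
  rw [natDegree_rowPoly hk hl h₁ hM₂.symm]
  omega

end IsCTilde

end RowRelation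

theorem det_case_zero (k l : ℕ) (hk : 2 ≤ k) (hl : 2 ≤ l) (C : ℕ → ℤ)
    (hC0 : C 0 = 1)
    (hC1 : ∀ n, 1 ≤ n → n ≤ k - 1 → C n = 0)
    (hC2 : ∀ n, k ≤ n → n ≤ k + l - 2 → C n = 1)
    (hrec : ∀ n, k + l - 1 ≤ n → C n = ∑ m ∈ Finset.Icc l (k + l - 1), C (n - m))
    (hcase : (¬ k ∣ l - 1 ∧ ¬ k ∣ l - 2) ∨ 1 < Nat.gcd l (k - 1))
    (A : Matrix (Fin (k + l - 1)) (Fin (k + l - 1)) ℤ)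
    (hA : A = Matrix.of fun i c : Fin (k + l - 1) =>
      if (c : ℕ) = 0 then C ((i : ℕ)) else C ((i : ℕ) + l + (c : ℕ) - 1)) :
    A.det = 0 := by
  have hC : IsCTilde k l C := ⟨hC0, hC1, hC2, hrec⟩
  rw [hA, ← shiftMatrix_colShift]
  rcases hcase with ⟨h₁, h₂⟩ | hgcd
  · obtain ⟨q, hq, hdvd, hsupp⟩ := exists_recPoly_dvd_of_not_dvd (by omega) h₁ h₂
    exact det_shiftMatrix_eq_zero_of_support (colShift_injective (by omega)) hq
      (fun j hj => mem_range_colShift (by omega) (hsupp j hj))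
      (aeval_seqShift_eq_zero_of_dvd hdvd (hC.aeval_recPoly (by omega)))
  · obtain ⟨u, hu, hdeg, hCu⟩ := hC.exists_aeval_eq_zero_of_dvd (by omega) (by omega) hgcd
      (Nat.gcd_dvd_left l (k - 1)) (Nat.gcd_dvd_right l (k - 1))
    exact det_shiftMatrix_eq_zero_of_natDegree_lt _ hu hdeg hCu
end

section
/- Let k, ℓ ≥ 2 and let C : ℕ → ℤ be the dying-rabbit sequence with initial conditions C_0 = ⋯ = C_{ℓ-1} = 1 and C_n = C_{n-1} + C_{n-ℓ} for ℓ ≤ n ≤ k+ℓ-2, satisfying C_n = ∑_{m=ℓ}^{k+ℓ-1} C_{n-m} for n ≥ k+ℓ-1. Let C̃ be the sequence with the same recurrence and initial conditions C̃_0 = 1, C̃_1 = ⋯ = C̃_{k-1} = 0, C̃_k = ⋯ = C̃_{k+ℓ-2} = 1. Then C_n = C̃_{n+k+1} for every n ≥ 0. -/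
/-!
Both `C` and `n ↦ C̃ (n + k + 1)` satisfy the defining conditions of `C` (value `1` below `ℓ`,
`X n = X (n - 1) + X (n - ℓ)` on `[ℓ, k + ℓ - 2]`, the long recurrence afterwards), and these
conditions determine a sequence. For the shifted sequence the middle relation comes from
subtracting two consecutive instances of the long recurrence,
`X (n + 1) - X n = X (n + 1 - ℓ) - X (n - (k + ℓ - 1))`, in which the last term is one of the zero initial values of `C̃`.
-/

open Finset

theorem sum_Icc_apply_succ_sub {G : Type*} [AddCommGroup G] (X : ℕ → G) {a b n : ℕ}
    (hab : a ≤ b) (hbn : b ≤ n) :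
    ∑ m ∈ Icc a b, X (n + 1 - m) = ∑ m ∈ Icc a b, X (n - m) + X (n + 1 - a) - X (n - b) := by
  induction b, hab using Nat.le_induction with
  | base => simp
  | succ b hab ih =>
    rw [sum_Icc_succ_top (by omega), sum_Icc_succ_top (by omega), ih (by omega),
      show n + 1 - (b + 1) = n - b by omega]
    abel

theorem add_one_eq_of_sum_Icc_recurrence {G : Type*} [AddCommGroup G] {X : ℕ → G} {a b : ℕ}
    (hab : a ≤ b) (hX : ∀ n, b ≤ n → X n = ∑ m ∈ Icc a b, X (n - m)) {n : ℕ} (hn : b ≤ n) :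
    X (n + 1) = X n + X (n + 1 - a) - X (n - b) := by
  rw [hX (n + 1) (by omega), hX n hn, sum_Icc_apply_succ_sub X hab hn]

structure IsDyingRabbit (k l : ℕ) (C : ℕ → ℤ) : Prop where
  init : ∀ n ≤ l - 1, C n = 1
  mid : ∀ n, l ≤ n → n ≤ k + l - 2 → C n = C (n - 1) + C (n - l)
  recurrence : ∀ n, k + l - 1 ≤ n → C n = ∑ m ∈ Icc l (k + l - 1), C (n - m)

theorem IsDyingRabbit.unique {k l : ℕ} (hl : 1 ≤ l) {C C' : ℕ → ℤ}
    (hC : IsDyingRabbit k l C) (hC' : IsDyingRabbit k l C') : C = C' := by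
  funext n
  induction n using Nat.strong_induction_on with
  | _ n ih =>
    rcases le_or_gt n (l - 1) with hinit | hn
    · rw [hC.init n hinit, hC'.init n hinit]
    rcases le_or_gt n (k + l - 2) with hmid | hrec
    · rw [hC.mid n (by omega) hmid, hC'.mid n (by omega) hmid, ih (n - 1) (by omega),
        ih (n - l) (by omega)]
    · rw [hC.recurrence n (by omega), hC'.recurrence n (by omega)]
      exact sum_congr rfl fun m hm => ih _ (by simp only [mem_Icc] at hm; omega)

theorem isDyingRabbit_shift {k l : ℕ} {Ct : ℕ → ℤ} (hk : 1 ≤ k) (hl : 2 ≤ l) (hCt0 : Ct 0 = 1)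
    (hCt1 : ∀ n, 1 ≤ n → n ≤ k - 1 → Ct n = 0)
    (hCt2 : ∀ n, k ≤ n → n ≤ k + l - 2 → Ct n = 1)
    (hCtrec : ∀ n, k + l - 1 ≤ n → Ct n = ∑ m ∈ Icc l (k + l - 1), Ct (n - m)) :
    IsDyingRabbit k l (fun n => Ct (n + k + 1)) := by
  have hsucc : ∀ n, k + l - 1 ≤ n → Ct (n + 1) = Ct n + Ct (n + 1 - l) - Ct (n - (k + l - 1)) :=
    fun n => add_one_eq_of_sum_Icc_recurrence (by omega) hCtrec
  have hlast : Ct (k + l - 1) = 1 := by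
    rw [hCtrec _ le_rfl, sum_eq_single_of_mem (k + l - 1) (by simp only [mem_Icc]; omega), Nat.sub_self, hCt0]
    intro m hm hne
    simp only [mem_Icc] at hm
    exact hCt1 _ (by omega) (by omega)
  refine ⟨fun n hn => ?_, fun n hln hnk => ?_, fun n hn => ?_⟩
  · rcases lt_or_ge n (l - 2) with hlt | hge
    · exact hCt2 _ (by omega) (by omega)
    obtain rfl | rfl : n = l - 2 ∨ n = l - 1 := by omega
    · rwa [show l - 2 + k + 1 = k + l - 1 by omega]
    · rw [show l - 1 + k + 1 = k + l - 1 + 1 by omega, hsucc _ le_rfl, hlast,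
        show k + l - 1 + 1 - l = k by omega, Nat.sub_self, hCt0, hCt2 k le_rfl (by omega)]
      ring
  · rw [hsucc (n + k) (by omega),
      hCt1 (n + k - (k + l - 1)) (by omega) (by omega), show n - 1 + k + 1 = n + k by omega,
      show n - l + k + 1 = n + k + 1 - l by omega, sub_zero]
  · rw [hCtrec _ (by omega)]
    exact sum_congr rfl fun m hm => by simp only [mem_Icc] at hm; congr 1; omega

theorem shift_of_sequences (k l : ℕ) (hk : 2 ≤ k) (hl : 2 ≤ l)
    (C Ct : ℕ → ℤ)
    (hCinit : ∀ n ≤ l - 1, C n = 1)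
    (hCmid : ∀ n, l ≤ n → n ≤ k + l - 2 → C n = C (n - 1) + C (n - l))
    (hCrec : ∀ n, k + l - 1 ≤ n → C n = ∑ m ∈ Finset.Icc l (k + l - 1), C (n - m))
    (hCt0 : Ct 0 = 1)
    (hCt1 : ∀ n, 1 ≤ n → n ≤ k - 1 → Ct n = 0)
    (hCt2 : ∀ n, k ≤ n → n ≤ k + l - 2 → Ct n = 1)
    (hCtrec : ∀ n, k + l - 1 ≤ n → Ct n = ∑ m ∈ Finset.Icc l (k + l - 1), Ct (n - m)) :
    ∀ n : ℕ, C n = Ct (n + k + 1) :=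
  congrFun (IsDyingRabbit.unique (by omega) ⟨hCinit, hCmid, hCrec⟩
    (isDyingRabbit_shift (by omega) hl hCt0 hCt1 hCt2 hCtrec))
end
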